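/- Let G be a connected oriented graph with reduced incidence matrix B ∈ ℝ^{m×n}, and fix β ∈ ℝ^m. Suppose (θ, k) and (θ', k') both satisfy B θ = β + 2π k and B θ' = β + 2π k' with k, k' ∈ ℤ^m. Then there exists α ∈ ℤ^n such that θ' = θ + 2π α and k' = k + B α. -/

import Mathlib

/-!
Subtracting the two equations shows that `d = θ' - θ` satisfies `B d ∈ 2πℤ^m`. Extending `d`
by `0` at the grounded vertex `0`, `B d` lists the differences of this potential along the edges;
since the graph is connected, every vertex is joined to `0` by a path, so every value of the
potential, i.e. every `dᵢ`, lies in `2πℤ`. Writing `d = 2πα`, linearity of `B` turns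
`B θ' = B θ + 2π B α` into `k' = k + B α`.
-/

/-- Reduced (transposed) incidence matrix of an oriented graph on vertices `0,…,n`. -/
def incB (n m : ℕ) (src tgt : Fin m → Fin (n + 1)) : Matrix (Fin m) (Fin n) ℝ :=
  fun e i => (if src e = i.succ then 1 else 0) - (if tgt e = i.succ then 1 else 0)

/-- Connectedness of the underlying undirected graph. -/
def GraphConnected (n m : ℕ) (src tgt : Fin m → Fin (n + 1)) : Prop :=
  ∀ a b : Fin (n + 1),
    Relation.ReflTransGen
      (fun u v => ∃ e, (src e = u ∧ tgt e = v) ∨ (src e = v ∧ tgt e = u)) a b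

def groundedPotential {n : ℕ} (x : Fin n → ℝ) : Fin (n + 1) → ℝ := Fin.cons 0 x

@[simp] lemma groundedPotential_zero {n : ℕ} (x : Fin n → ℝ) : groundedPotential x 0 = 0 := rfl

@[simp] lemma groundedPotential_succ {n : ℕ} (x : Fin n → ℝ) (i : Fin n) :
    groundedPotential x i.succ = x i := rfl

lemma incB_mulVec {n m : ℕ} (src tgt : Fin m → Fin (n + 1)) (x : Fin n → ℝ) (e : Fin m) :
    (incB n m src tgt).mulVec x e =
      groundedPotential x (src e) - groundedPotential x (tgt e) := by
  have hrow : ∀ v : Fin (n + 1),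
      ∑ i, (if v = i.succ then (1 : ℝ) else 0) * x i = groundedPotential x v := by
    intro v
    induction v using Fin.cases with
    | zero => simp [(Fin.succ_ne_zero _).symm]
    | succ j => simp [Fin.succ_inj]
  simp only [Matrix.mulVec, dotProduct, incB, sub_mul, Finset.sum_sub_distrib, hrow]

lemma GraphConnected.sub_mem {n m : ℕ} {src tgt : Fin m → Fin (n + 1)}
    (hconn : GraphConnected n m src tgt) {A : Type*} [AddGroup A] (H : AddSubgroup A)
    {f : Fin (n + 1) → A} (hf : ∀ e, f (src e) - f (tgt e) ∈ H) (u v : Fin (n + 1)) :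
    f u - f v ∈ H := by
  induction hconn u v with
  | refl => simp
  | tail _ hedge ih =>
    obtain ⟨e, ⟨rfl, rfl⟩ | ⟨rfl, rfl⟩⟩ := hedge
    · simpa using H.add_mem ih (hf e)
    · simpa using H.add_mem ih (H.neg_mem (hf e))

/-- Any two solutions `(θ,k)`, `(θ',k')` of `Bθ = β + 2πk` differ by an integer shift
`θ' = θ + 2πα`, `k' = k + Bα` for some `α ∈ ℤ^n`. -/
theorem stmt_8 (n m : ℕ) (src tgt : Fin m → Fin (n + 1))
    (hconn : GraphConnected n m src tgt)
    (β : Fin m → ℝ) (k k' : Fin m → ℤ) (θ θ' : Fin n → ℝ)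
    (hθ : ∀ e, (incB n m src tgt).mulVec θ e = β e + 2 * Real.pi * k e)
    (hθ' : ∀ e, (incB n m src tgt).mulVec θ' e = β e + 2 * Real.pi * k' e) :
    ∃ α : Fin n → ℤ,
      (∀ i, θ' i = θ i + 2 * Real.pi * α i) ∧
      (∀ e, (k' e : ℝ) = (k e : ℝ) +
        (incB n m src tgt).mulVec (fun i => (α i : ℝ)) e) := by
  have hedge : ∀ e, groundedPotential (θ' - θ) (src e) - groundedPotential (θ' - θ) (tgt e) ∈
      AddSubgroup.zmultiples (2 * Real.pi) := fun e =>
    AddSubgroup.mem_zmultiples_iff.mpr ⟨k' e - k e, by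
      rw [← incB_mulVec, Matrix.mulVec_sub, Pi.sub_apply, hθ, hθ', zsmul_eq_mul, Int.cast_sub]
      ring⟩
  have hshift : ∀ i, ∃ a : ℤ, θ' i - θ i = 2 * Real.pi * a := fun i => by
    obtain ⟨a, ha⟩ := hconn.sub_mem _ hedge i.succ 0
    exact ⟨a, by simpa [mul_comm] using ha.symm⟩
  choose α hα using hshift
  have hθ'_eq : θ' = θ + (2 * Real.pi) • fun i => (α i : ℝ) := by
    ext i; simp [← hα i]
  refine ⟨α, fun i => by linarith [hα i], fun e => ?_⟩
  have h := hθ' e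
  rw [hθ'_eq, Matrix.mulVec_add, Matrix.mulVec_smul, Pi.add_apply, Pi.smul_apply, hθ,
    smul_eq_mul] at h
  have hpi : 2 * Real.pi ≠ 0 := by positivity
  exact mul_left_cancel₀ hpi (by linarith)
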